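/- arXiv:1405.5997 — 2 statements merged into one kernel-verified Lean document; each statement's English description precedes it below -/
import Mathlib

section
/- Let K ≥ 1 be an integer, let λ, μ > 0, and let s ∈ [K/2 + λ/μ, K − log₂ K − 3]. Then any ρ > 0 satisfying s = (λ/μ)ρ + Σ_{k=1}^{K} ν_{ρ,K}(k) lies in [1 − 2^{−K/2}, 1], and consequently P(ρ, K) ≤ 4 √K · 2^{−K/2}. -/
/-!
The relations telescope to `ν_{k+1} = ρ (ν_k² - ν_K²)`, so `ν_{k+1} ≤ ρ ν_k²` and, because
`ν_1 ≤ 1`, also `ν_{k+1} ≤ ν_k²`. A profile exists: solving the telescoped relations downwards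
from `ν_K = t` gives values that are continuous in `t`, and the intermediate value theorem
picks the `t` with `ν_0 = 1`.

If `ρ < 1 - 2^{-K/2}`, then `ν_k ≤ ρ^{2^k - 1}` decays doubly exponentially once `k ≥ K/2`,
so `∑ ν_k ≤ K/2` and `s < λ/μ + K/2`. If `ρ > 1`, then `∑ (1 - ν_k) ≤ log₂ K + 3`, so
`s > K - log₂ K - 3`: with `j = ⌊log₂ K⌋ + 1`, either `ν_K ≤ ν_{K-j}^{2^j} ≤ 2^{-K}` and the
forward bound `1 - ν_k ≤ 2^k ν_K²` applies, or `ν_{K-j} ≥ 1/2` and the odds `(1 - ν_k)/ν_k`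
at least halve at each step down from `K - j`. Finally, for `1 - δ ≤ ρ ≤ 1` with
`δ = 2^{-K/2}`, the bound `ν_K ≤ ν_1^{2^{K-1}} ≤ exp (-2^{K-1} ν_K²)` forces `ν_K ≤ 2 √K δ`,
while `1 - ν_1 = 1 - ρ (1 - ν_K²) ≤ δ + ν_K²`.
-/

open Finset Real

noncomputable section

/-- Extend a vector `v = (v_0, …, v_K) ∈ ℝ^{K+1}` to `ℕ → ℝ` by zero,
implementing the convention `v_{K+1} = 0`. -/
def extProfile (K : ℕ) (v : Fin (K + 1) → ℝ) : ℕ → ℝ :=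
  fun k => if h : k < K + 1 then v ⟨k, h⟩ else 0

/-- `v = (v_0, …, v_K)` is a two-choice profile for `(ρ, K)`:
`1 = v_0 ≥ v_1 ≥ … ≥ v_K ≥ 0` and, with the convention `v_{K+1} = 0`,
`v_k − v_{k+1} = ρ (v_{k−1}² − v_k²)` for every `1 ≤ k ≤ K`. -/
def IsTwoChoiceProfile (ρ : ℝ) (K : ℕ) (v : Fin (K + 1) → ℝ) : Prop :=
  extProfile K v 0 = 1 ∧
  (∀ k < K, extProfile K v (k + 1) ≤ extProfile K v k) ∧
  0 ≤ extProfile K v K ∧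
  ∀ k, 1 ≤ k → k ≤ K →
    extProfile K v k - extProfile K v (k + 1) =
      ρ * ((extProfile K v (k - 1)) ^ 2 - (extProfile K v k) ^ 2)

/-- When it exists, the unique two-choice profile for `(ρ, K)`, denoted `ν_{ρ,K}`. -/
def nu (ρ : ℝ) (K : ℕ) : Fin (K + 1) → ℝ :=
  Classical.epsilon (IsTwoChoiceProfile ρ K)

/-- `ν_{ρ,K}` viewed as a function on `ℕ` (with `ν_{ρ,K}(K+1) = 0`). -/
def nuV (ρ : ℝ) (K : ℕ) : ℕ → ℝ := extProfile K (nu ρ K)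

/-- `P(ρ, K) = (1 − ν_{ρ,K}(1)) + ν_{ρ,K}(K)`, the limiting proportion of
problematic (empty or full) queues. -/
def propProblematic (ρ : ℝ) (K : ℕ) : ℝ := (1 - nuV ρ K 1) + nuV ρ K K

theorem le_pow_two_pow_of_le_sq {a : ℕ → ℝ} (ha : ∀ k, 0 ≤ a k)
    (h : ∀ k, a (k + 1) ≤ a k ^ 2) (k : ℕ) : ∀ n, a (k + n) ≤ a k ^ 2 ^ n
  | 0 => by simp
  | n + 1 =>
    calc a (k + n + 1) ≤ a (k + n) ^ 2 := h _
      _ ≤ (a k ^ 2 ^ n) ^ 2 := pow_le_pow_left₀ (ha _) (le_pow_two_pow_of_le_sq ha h k n) 2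
      _ = a k ^ 2 ^ (n + 1) := by rw [← pow_mul, pow_succ]

theorem sum_Icc_one_le_two_mul {r : ℕ → ℝ} {n : ℕ} (h₀ : 0 ≤ r 0)
    (h : ∀ k < n, 2 * r k ≤ r (k + 1)) : ∑ k ∈ Icc 1 n, r k ≤ 2 * r n := by
  induction n with
  | zero => simpa using h₀
  | succ n ih =>
    rw [sum_Icc_succ_top (by omega)]
    linarith [ih fun k hk => h k (by omega), h n (by omega)]

theorem sum_Icc_one_eq_add_sum_Ioc (f : ℕ → ℝ) {m n : ℕ} (h : m ≤ n) :
    ∑ k ∈ Icc 1 n, f k = ∑ k ∈ Icc 1 m, f k + ∑ k ∈ Ioc m n, f k := by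
  have hIcc : ∀ n : ℕ, Icc 1 n = Ioc 0 n := fun n => Finset.Icc_add_one_left_eq_Ioc 0 n
  rw [hIcc, hIcc, sum_Ioc_consecutive f (Nat.zero_le m) h]

theorem two_mul_one_sub_div_le_of_le_sq {x y : ℝ} (hx : 0 < x) (hy : 0 < y) (hxy : x ≤ y ^ 2) :
    2 * ((1 - y) / y) ≤ (1 - x) / x := by
  have : 2 * x ≤ y * (1 + x) := by
    nlinarith [sq_nonneg (1 - x), sq_nonneg (y * (1 + x) - 2 * x), mul_pos hx hy]
  rw [mul_div_assoc', div_le_div_iff₀ hy hx]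
  nlinarith

theorem sum_Ioc_exp_neg_sub_le (p n : ℕ) :
    ∑ k ∈ Ioc p n, exp (-((k : ℝ) - p)) ≤ 1 / (exp 1 - 1) := by
  set r := exp (-1) with hr
  have hr₁ : r < 1 := Real.exp_lt_one_iff.2 (by norm_num)
  have hrp : exp p * r ^ p = 1 := by
    rw [hr, ← Real.exp_nat_mul, ← Real.exp_add]
    simp
  have he : exp 1 * r = 1 := by rw [hr, ← Real.exp_add]; simp
  have hterm : ∀ k : ℕ, exp (-((k : ℝ) - p)) = exp p * r ^ k := fun k => by
    rw [hr, ← Real.exp_nat_mul, ← Real.exp_add]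
    ring_nf
  simp_rw [hterm]
  rw [← mul_sum, ← Finset.Ico_add_one_add_one_eq_Ioc]
  calc exp p * ∑ k ∈ Ico (p + 1) (n + 1), r ^ k ≤ exp p * (r ^ (p + 1) / (1 - r)) := by
        gcongr
        exact geom_sum_Ico_le_of_lt_one (Real.exp_pos _).le hr₁
    _ = 1 / (exp 1 - 1) := by
        have : exp 1 - 1 ≠ 0 := by linarith [Real.add_one_le_exp 1]
        have : 1 - r ≠ 0 := by linarith
        rw [pow_succ, mul_div_assoc', ← mul_assoc, hrp, one_mul]
        field_simp
        linarith

theorem exp_neg_half_add_one_div_exp_one_sub_one_le :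
    exp (-(1 / 2)) + 1 / (exp 1 - 1) ≤ 1.26 := by
  have h₁ : exp (-(1 / 2)) ≤ 2 / 3 := by
    have : exp (1 / 2) * exp (-(1 / 2)) = 1 := by rw [← Real.exp_add]; simp
    nlinarith [Real.add_one_le_exp (1 / 2), Real.exp_pos (-(1 / 2))]
  have h₂ : 1 / (exp 1 - 1) ≤ 0.59 := by
    rw [div_le_iff₀ (by linarith [Real.exp_one_gt_d9])]
    linarith [Real.exp_one_gt_d9]
  linarith

theorem two_rpow_neg_half_sq_mul (K : ℕ) : ((2 : ℝ) ^ (-(K : ℝ) / 2)) ^ 2 * 2 ^ K = 1 := by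
  rw [← Real.rpow_natCast _ 2, ← Real.rpow_mul zero_le_two, ← Real.rpow_natCast 2 K,
    ← Real.rpow_add zero_lt_two]
  norm_num

theorem six_le_of_logb_add_three_le {K : ℕ} (h : logb 2 K + 3 ≤ K / 2) : 6 ≤ K := by
  have : 0 ≤ logb 2 (K : ℝ) := by
    rcases K.eq_zero_or_pos with rfl | hK
    · simp
    · exact Real.logb_nonneg one_lt_two (by exact_mod_cast hK)
  have : (6 : ℝ) ≤ K := by linarith
  exact_mod_cast this

theorem eight_mul_mul_two_rpow_neg_half_le_one {K : ℕ} (h : logb 2 K + 3 ≤ K / 2) :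
    8 * (K : ℝ) * 2 ^ (-(K : ℝ) / 2) ≤ 1 := by
  have hK : (0 : ℝ) < K := by
    have := six_le_of_logb_add_three_le h
    positivity
  have : 8 * (K : ℝ) ≤ 2 ^ ((K : ℝ) / 2) := by
    rw [← Real.logb_le_iff_le_rpow one_lt_two (by positivity),
      Real.logb_mul (by norm_num) hK.ne']
    have : logb 2 8 = 3 := by
      rw [show (8 : ℝ) = 2 ^ (3 : ℕ) by norm_num, Real.logb_pow]
      simp
    linarith
  calc 8 * (K : ℝ) * 2 ^ (-(K : ℝ) / 2) ≤ 2 ^ ((K : ℝ) / 2) * 2 ^ (-(K : ℝ) / 2) := by gcongr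
    _ = 1 := by
      rw [← Real.rpow_add two_pos, show (K : ℝ) / 2 + -(K : ℝ) / 2 = 0 by ring, Real.rpow_zero]

theorem extProfile_of_le {K k : ℕ} (v : Fin (K + 1) → ℝ) (hk : k ≤ K) :
    extProfile K v k = v ⟨k, Nat.lt_succ_of_le hk⟩ :=
  dif_pos _

theorem extProfile_of_lt {K k : ℕ} (v : Fin (K + 1) → ℝ) (hk : K < k) :
    extProfile K v k = 0 :=
  dif_neg (by omega)

/-- The candidate for `ν_{K-j}` when `ν_K = t`, solving the telescoped relations
`ν_{k-1}² = ν_k / ρ + t²` downwards. -/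
def profileFromTop (ρ t : ℝ) : ℕ → ℝ
  | 0 => t
  | j + 1 => √(profileFromTop ρ t j / ρ + t ^ 2)

namespace profileFromTop

variable {ρ t : ℝ}

theorem continuous (ρ : ℝ) : ∀ j, Continuous fun t => profileFromTop ρ t j
  | 0 => continuous_id
  | j + 1 => (((continuous ρ j).div_const ρ).add (continuous_pow 2)).sqrt

theorem nonneg (ht : 0 ≤ t) : ∀ j, 0 ≤ profileFromTop ρ t j
  | 0 => ht
  | _ + 1 => Real.sqrt_nonneg _

theorem sq_succ (hρ : 0 < ρ) (ht : 0 ≤ t) (j : ℕ) :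
    profileFromTop ρ t (j + 1) ^ 2 = profileFromTop ρ t j / ρ + t ^ 2 :=
  Real.sq_sqrt (by have := nonneg (ρ := ρ) ht j; positivity)

theorem monotone (hρ : 0 < ρ) (ht : 0 ≤ t) : Monotone (profileFromTop ρ t) := by
  refine monotone_nat_of_le_succ fun j => ?_
  induction j with
  | zero =>
    refine Real.le_sqrt_of_sq_le ?_
    have := div_nonneg ht hρ.le
    simp only [profileFromTop]
    linarith
  | succ j ih => exact Real.sqrt_le_sqrt (by gcongr)

theorem of_zero : ∀ j, profileFromTop ρ 0 j = 0
  | 0 => rfl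
  | j + 1 => by simp [profileFromTop, of_zero j]

theorem one_le_of_one (hρ : 0 < ρ) (j : ℕ) : 1 ≤ profileFromTop ρ 1 j :=
  monotone hρ zero_le_one (Nat.zero_le j)

end profileFromTop

theorem exists_isTwoChoiceProfile {ρ : ℝ} (hρ : 0 < ρ) (K : ℕ) :
    ∃ v, IsTwoChoiceProfile ρ K v := by
  obtain ⟨t, ⟨ht₀, -⟩, htK⟩ : ∃ t ∈ Set.Icc (0 : ℝ) 1, profileFromTop ρ t K = 1 :=
    intermediate_value_Icc zero_le_one (profileFromTop.continuous ρ K).continuousOn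
      ⟨by rw [profileFromTop.of_zero]; exact zero_le_one, profileFromTop.one_le_of_one hρ K⟩
  set v : Fin (K + 1) → ℝ := fun k => profileFromTop ρ t (K - k)
  have hv : ∀ k ≤ K, extProfile K v k = profileFromTop ρ t (K - k) := fun k hk =>
    extProfile_of_le v hk
  have hsq : ∀ k ≤ K, extProfile K v k ^ 2 = extProfile K v (k + 1) / ρ + t ^ 2 := by
    intro k hk
    rcases hk.lt_or_eq with hk | rfl
    · rw [hv k hk.le, hv (k + 1) hk, show K - k = K - (k + 1) + 1 by omega,
        profileFromTop.sq_succ hρ ht₀]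
    · rw [hv k le_rfl, extProfile_of_lt v (Nat.lt_succ_self k), Nat.sub_self]
      simp [profileFromTop]
  refine ⟨v, ?_, fun k hk => ?_, ?_, fun k hk₁ hkK => ?_⟩
  · rw [hv 0 (Nat.zero_le K), Nat.sub_zero, htK]
  · rw [hv k hk.le, hv (k + 1) hk, show K - k = K - (k + 1) + 1 by omega]
    exact profileFromTop.monotone hρ ht₀ (Nat.le_succ _)
  · rw [hv K le_rfl, Nat.sub_self]
    exact ht₀
  · have hprev := hsq (k - 1) (by omega)
    rw [Nat.sub_add_cancel hk₁] at hprev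
    rw [hprev, hsq k hkK]
    field_simp
    ring

theorem isTwoChoiceProfile_nu {ρ : ℝ} (hρ : 0 < ρ) (K : ℕ) :
    IsTwoChoiceProfile ρ K (nu ρ K) :=
  Classical.epsilon_spec (exists_isTwoChoiceProfile hρ K)

namespace IsTwoChoiceProfile

variable {ρ : ℝ} {K : ℕ} {v : Fin (K + 1) → ℝ}

local notation "ν" => extProfile K v

theorem antitone (hv : IsTwoChoiceProfile ρ K v) : Antitone ν := by
  refine antitone_nat_of_succ_le fun k => ?_
  rcases lt_trichotomy k K with hk | rfl | hk
  · exact hv.2.1 k hk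
  · rw [extProfile_of_lt v (Nat.lt_succ_self k)]
    exact hv.2.2.1
  · rw [extProfile_of_lt v hk, extProfile_of_lt v (by omega)]

theorem nonneg (hv : IsTwoChoiceProfile ρ K v) (k : ℕ) : 0 ≤ ν k := by
  rcases le_or_gt k K with hk | hk
  · exact hv.2.2.1.trans (hv.antitone hk)
  · rw [extProfile_of_lt v hk]

theorem le_one (hv : IsTwoChoiceProfile ρ K v) (k : ℕ) : ν k ≤ 1 :=
  hv.1 ▸ hv.antitone (Nat.zero_le k)

-- The defining relations say exactly that `ν_{k+1} - ρ ν_k²` does not depend on `k`.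
theorem succ_eq_mul_sq_sub (hv : IsTwoChoiceProfile ρ K v) {k : ℕ} (hk : k < K) :
    ν (k + 1) = ρ * (ν k ^ 2 - ν K ^ 2) := by
  suffices ν (k + 1) - ρ * ν k ^ 2 = -ρ * ν K ^ 2 by linarith
  refine Nat.decreasingInduction (motive := fun k _ => ν (k + 1) - ρ * ν k ^ 2 = -ρ * ν K ^ 2)
    (fun k hk ih => ?_) ?_ hk.le
  · have := hv.2.2.2 (k + 1) (by omega) hk
    rw [Nat.add_sub_cancel] at this
    linarith
  · rw [extProfile_of_lt v (Nat.lt_succ_self K)]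
    ring

theorem apply_one (hv : IsTwoChoiceProfile ρ K v) (hK : 1 ≤ K) : ν 1 = ρ * (1 - ν K ^ 2) := by
  simpa [hv.1] using hv.succ_eq_mul_sq_sub hK

theorem succ_le_mul_sq (hv : IsTwoChoiceProfile ρ K v) (hρ : 0 ≤ ρ) (k : ℕ) :
    ν (k + 1) ≤ ρ * ν k ^ 2 := by
  rcases lt_or_ge k K with hk | hk
  · rw [hv.succ_eq_mul_sq_sub hk]
    nlinarith [sq_nonneg (ν K)]
  · rw [extProfile_of_lt v (by omega)]
    positivity

theorem succ_le_sq (hv : IsTwoChoiceProfile ρ K v) (k : ℕ) : ν (k + 1) ≤ ν k ^ 2 := by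
  rcases lt_or_ge k K with hk | hk
  · have h₁ := hv.apply_one (by omega)
    have hwa : ν K ^ 2 ≤ ν k ^ 2 := pow_le_pow_left₀ (hv.nonneg K) (hv.antitone hk.le) 2
    have ha : ν k ^ 2 ≤ 1 := pow_le_one₀ (hv.nonneg k) (hv.le_one k)
    have hν₁ := hv.le_one 1
    have hνk := hv.le_one (k + 1)
    rw [h₁] at hν₁
    rw [hv.succ_eq_mul_sq_sub hk] at hνk ⊢
    nlinarith [mul_nonneg (sub_nonneg.2 hwa) (sub_nonneg.2 hν₁),
      mul_nonneg (sq_nonneg (ν K)) (sub_nonneg.2 hνk)]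
  · rw [extProfile_of_lt v (by omega)]
    positivity

theorem le_pow_two_pow (hv : IsTwoChoiceProfile ρ K v) (k n : ℕ) : ν (k + n) ≤ ν k ^ 2 ^ n :=
  le_pow_two_pow_of_le_sq hv.nonneg hv.succ_le_sq k n

theorem one_sub_add_sq_le (hv : IsTwoChoiceProfile ρ K v) (hρ : 1 ≤ ρ) :
    ∀ k ≤ K, 1 - ν k + ν K ^ 2 ≤ 2 ^ k * ν K ^ 2
  | 0, _ => by simp [hv.1]
  | k + 1, hk => by
    have ih := one_sub_add_sq_le hv hρ k (by omega)
    have hwa : ν K ^ 2 ≤ ν k ^ 2 := pow_le_pow_left₀ (hv.nonneg K) (hv.antitone (by omega)) 2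
    have : ν k ^ 2 - ν K ^ 2 ≤ ν (k + 1) := by
      rw [hv.succ_eq_mul_sq_sub (by omega)]
      nlinarith
    rw [pow_succ (2 : ℝ) k]
    nlinarith [sq_nonneg (1 - ν k)]

theorem sum_Icc_one_sub_le (hv : IsTwoChoiceProfile ρ K v) {M : ℕ} (hM : 0 < ν M) :
    ∑ k ∈ Icc 1 M, (1 - ν k) ≤ 2 * ((1 - ν M) / ν M) := by
  have hpos : ∀ k ≤ M, 0 < ν k := fun k hk => hM.trans_le (hv.antitone hk)
  refine (sum_le_sum fun k hk => ?_).trans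
    (sum_Icc_one_le_two_mul (r := fun k => (1 - ν k) / ν k) (by rw [hv.1]; norm_num)
      fun k hk => ?_)
  · exact le_div_self (sub_nonneg.2 (hv.le_one k)) (hpos k (mem_Icc.1 hk).2) (hv.le_one k)
  · exact two_mul_one_sub_div_le_of_le_sq (hpos _ hk) (hpos k hk.le) (hv.succ_le_sq k)

theorem sum_one_sub_le_logb (hv : IsTwoChoiceProfile ρ K v) (hρ : 1 ≤ ρ) (hK : 1 ≤ K) :
    ∑ k ∈ Icc 1 K, (1 - ν k) ≤ logb 2 K + 3 := by
  set j := Nat.log 2 K + 1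
  have hjK : j ≤ K := Nat.log_lt_self 2 (by omega)
  have hKj : K ≤ 2 ^ j := (Nat.lt_pow_succ_log_self one_lt_two K).le
  have hj : (j : ℝ) ≤ logb 2 K + 1 := by
    have := Real.natLog_le_logb K 2
    push_cast [j] at this ⊢
    linarith
  have hlog : 0 ≤ logb 2 K := Real.logb_nonneg one_lt_two (by exact_mod_cast hK)
  by_cases hM : 1 / 2 ≤ ν (K - j)
  · have hodds : (1 - ν (K - j)) / ν (K - j) ≤ 1 := by
      rw [div_le_one (by linarith)]
      linarith
    have hlast : ∑ k ∈ Ioc (K - j) K, (1 - ν k) ≤ j := by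
      have := sum_le_card_nsmul (Ioc (K - j) K) (fun k => 1 - ν k) 1
        fun k _ => by linarith [hv.nonneg k]
      simpa [Nat.sub_sub_self hjK] using this
    rw [sum_Icc_one_eq_add_sum_Ioc _ (Nat.sub_le K j)]
    linarith [hv.sum_Icc_one_sub_le (M := K - j) (by linarith)]
  · push Not at hM
    have ht : 2 ^ K * ν K ≤ 1 := by
      have := hv.le_pow_two_pow (K - j) j
      rw [Nat.sub_add_cancel hjK] at this
      calc 2 ^ K * ν K ≤ 2 ^ K * (1 / 2) ^ K := by
            gcongr
            calc ν K ≤ ν (K - j) ^ 2 ^ j := this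
              _ ≤ (1 / 2) ^ 2 ^ j := by gcongr; exact hv.nonneg _
              _ ≤ (1 / 2) ^ K := pow_le_pow_of_le_one (by norm_num) (by norm_num) hKj
        _ = 1 := by rw [← mul_pow]; norm_num
    have hterm : ∀ k ∈ Icc 1 K, 1 - ν k ≤ ν K := by
      intro k hk
      have h2k : (2 : ℝ) ^ k ≤ 2 ^ K := pow_le_pow_right₀ one_le_two (mem_Icc.1 hk).2
      nlinarith [hv.one_sub_add_sq_le hρ k (mem_Icc.1 hk).2, hv.nonneg K]
    have hK2 : (K : ℝ) ≤ 2 ^ K := by exact_mod_cast (Nat.lt_two_pow_self).le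
    have := sum_le_card_nsmul (Icc 1 K) (fun k => 1 - ν k) (ν K) hterm
    simp only [Nat.card_Icc, add_tsub_cancel_right, nsmul_eq_mul] at this
    nlinarith [hv.nonneg K]

theorem le_exp_mul_exp (hv : IsTwoChoiceProfile ρ K v) (hρ : 0 < ρ) {δ : ℝ} (hρδ : ρ ≤ 1 - δ)
    (k : ℕ) : ν k ≤ exp δ * exp (-(2 ^ k * δ)) := by
  have hρν : ρ * ν k ≤ ρ ^ 2 ^ k := by
    have := le_pow_two_pow_of_le_sq (a := fun k => ρ * ν k)
      (fun k => mul_nonneg hρ.le (hv.nonneg k))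
      (fun k => by nlinarith [hv.succ_le_mul_sq hρ.le k]) 0 k
    simpa [hv.1] using this
  have hρe : ρ ≤ exp (-δ) := hρδ.trans (by linarith [Real.add_one_le_exp (-δ)])
  have hpos : 2 ^ k ≠ 0 := by positivity
  calc ν k ≤ ρ ^ (2 ^ k - 1) := by
        rw [← pow_sub_one_mul hpos] at hρν
        nlinarith [pow_pos hρ (2 ^ k - 1)]
    _ ≤ exp (-δ) ^ (2 ^ k - 1) := pow_le_pow_left₀ hρ.le hρe _
    _ = exp δ * (exp (-δ) ^ (2 ^ k - 1) * exp (-δ)) := by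
        rw [mul_comm (exp δ), mul_assoc, ← Real.exp_add]
        simp
    _ = exp δ * exp (-(2 ^ k * δ)) := by
        rw [pow_sub_one_mul hpos, ← Real.exp_nat_mul]
        push_cast
        ring_nf

theorem sum_Ioc_le (hv : IsTwoChoiceProfile ρ K v) (hρ : 0 < ρ) {δ : ℝ} (hρδ : ρ ≤ 1 - δ)
    {p : ℕ} (hpδ : 1 ≤ 2 ^ (p + 1) * δ) : ∑ k ∈ Ioc p K, ν k ≤ exp δ * (1 / (exp 1 - 1)) := by
  have htail : ∀ k ∈ Ioc p K, ν k ≤ exp δ * exp (-((k : ℝ) - p)) := by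
    intro k hk
    obtain ⟨i, rfl⟩ : ∃ i, k = p + 1 + i := ⟨k - (p + 1), by grind⟩
    refine (hv.le_exp_mul_exp hρ hρδ _).trans ?_
    have hi : (i : ℝ) + 1 ≤ 2 ^ i := by exact_mod_cast Nat.lt_two_pow_self
    gcongr
    push_cast
    rw [pow_add]
    nlinarith [pow_pos (two_pos (α := ℝ)) i]
  calc ∑ k ∈ Ioc p K, ν k ≤ ∑ k ∈ Ioc p K, exp δ * exp (-((k : ℝ) - p)) := sum_le_sum htail
    _ ≤ exp δ * (1 / (exp 1 - 1)) := by
        rw [← mul_sum]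
        gcongr
        exact sum_Ioc_exp_neg_sub_le p K

theorem sum_le_half (hv : IsTwoChoiceProfile ρ K v) (hρ : 0 < ρ)
    (hρδ : ρ ≤ 1 - 2 ^ (-(K : ℝ) / 2)) (hK : 6 ≤ K) : ∑ k ∈ Icc 1 K, ν k ≤ K / 2 := by
  set δ : ℝ := 2 ^ (-(K : ℝ) / 2)
  have hδ₀ : 0 < δ := by positivity
  have hδsq : δ ^ 2 * 2 ^ K = 1 := two_rpow_neg_half_sq_mul K
  have hδ₈ : δ ≤ 1 / 8 := by
    have : (2 : ℝ) ^ 6 ≤ 2 ^ K := pow_le_pow_right₀ one_le_two hK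
    nlinarith
  set p := (K - 1) / 2
  have hp : 2 * p + 1 ≤ K := by omega
  have hpδ : 1 ≤ 2 ^ (p + 1) * δ := by
    have : (2 : ℝ) ^ K ≤ (2 ^ (p + 1)) ^ 2 := by
      rw [← pow_mul]
      exact pow_le_pow_right₀ one_le_two (by omega)
    refine le_of_pow_le_pow_left₀ two_ne_zero (by positivity) ?_
    rw [one_pow, mul_pow]
    nlinarith
  have hmid : ν p ≤ exp δ * exp (-(1 / 2)) := by
    refine (hv.le_exp_mul_exp hρ hρδ p).trans ?_
    rw [pow_succ] at hpδ
    gcongr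
    linarith
  have hhead : ∑ k ∈ Ico 1 p, ν k ≤ p - 1 := by
    have := sum_le_card_nsmul (Ico 1 p) _ 1 fun k _ => hv.le_one k
    simpa [Nat.cast_sub (show 1 ≤ p by omega)] using this
  have hexpδ : exp δ ≤ 8 / 7 := by
    have : exp δ * exp (-δ) = 1 := by rw [← Real.exp_add]; simp
    nlinarith [Real.add_one_le_exp (-δ), Real.exp_pos δ]
  calc ∑ k ∈ Icc 1 K, ν k = ∑ k ∈ Ico 1 p, ν k + ν p + ∑ k ∈ Ioc p K, ν k := by
        rw [sum_Icc_one_eq_add_sum_Ioc _ (by omega : p ≤ K),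
          ← Finset.Ico_add_one_right_eq_Icc, sum_Ico_succ_top (by omega)]
    _ ≤ (p - 1) + exp δ * exp (-(1 / 2)) + exp δ * (1 / (exp 1 - 1)) := by
        gcongr
        exact hv.sum_Ioc_le hρ hρδ hpδ
    _ ≤ (p - 1) + 8 / 7 * 1.26 := by
        have : 0 ≤ exp (-(1 / 2)) + 1 / (exp 1 - 1) :=
          add_nonneg (Real.exp_pos _).le
            (div_nonneg zero_le_one (by linarith [Real.add_one_le_exp 1]))
        rw [add_assoc, ← mul_add]
        gcongr
        exact exp_neg_half_add_one_div_exp_one_sub_one_le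
    _ ≤ K / 2 := by
        have : (2 * p + 1 : ℝ) ≤ K := by exact_mod_cast hp
        linarith

theorem two_pow_mul_sq_le (hv : IsTwoChoiceProfile ρ K v) (hρ₁ : ρ ≤ 1) (hK : 1 ≤ K) :
    2 ^ (K - 1) * ν K ^ 2 ≤ K := by
  set t := ν K
  have ht₀ : 0 ≤ t := hv.nonneg K
  have hdecay : t ≤ exp (-(2 ^ (K - 1) * t ^ 2)) := by
    have := hv.le_pow_two_pow 1 (K - 1)
    rw [Nat.add_sub_cancel' hK] at this
    calc t ≤ ν 1 ^ 2 ^ (K - 1) := this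
      _ ≤ exp (-t ^ 2) ^ 2 ^ (K - 1) := by
          gcongr
          · exact hv.nonneg 1
          · rw [hv.apply_one hK]
            nlinarith [Real.add_one_le_exp (-t ^ 2), mul_le_of_le_one_left
              (sub_nonneg.2 (pow_le_one₀ ht₀ (hv.le_one K) (n := 2))) hρ₁]
      _ = exp (-(2 ^ (K - 1) * t ^ 2)) := by
          rw [← Real.exp_nat_mul]
          push_cast
          ring_nf
  by_contra! h
  -- then `t < exp (-K) ≤ 2⁻ᴷ`, which in turn makes `2^(K-1) t²` at most `1`
  have h₂ : 2 ^ K * t ≤ 1 := by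
    have he : (2 * exp (-1)) ^ K ≤ 1 :=
      pow_le_one₀ (by positivity) (by
        have : exp 1 * exp (-1) = 1 := by rw [← Real.exp_add]; simp
        nlinarith [Real.add_one_le_exp 1, Real.exp_pos (-1)])
    calc 2 ^ K * t ≤ 2 ^ K * exp (-1) ^ K := by
          gcongr
          rw [← Real.exp_nat_mul]
          exact hdecay.trans (Real.exp_le_exp.2 (by linarith))
      _ ≤ 1 := by rwa [← mul_pow]
  have hK₂ : (2 : ℝ) ^ K = 2 * 2 ^ (K - 1) := by
    rw [← pow_succ', Nat.sub_add_cancel hK]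
  have : (1 : ℝ) ≤ K := by exact_mod_cast hK
  nlinarith [pow_pos (two_pos (α := ℝ)) (K - 1), hv.le_one K]

theorem one_sub_add_le_four_mul_sqrt (hv : IsTwoChoiceProfile ρ K v) (hρ₁ : ρ ≤ 1)
    (hρδ : 1 - 2 ^ (-(K : ℝ) / 2) ≤ ρ) (hK : 1 ≤ K)
    (hKδ : 8 * (K : ℝ) * 2 ^ (-(K : ℝ) / 2) ≤ 1) :
    1 - ν 1 + ν K ≤ 4 * √K * 2 ^ (-(K : ℝ) / 2) := by
  set δ : ℝ := 2 ^ (-(K : ℝ) / 2)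
  set t := ν K
  have hδ₀ : 0 < δ := by positivity
  have ht₀ : 0 ≤ t := hv.nonneg K
  have htδ : t ^ 2 ≤ 2 * K * δ ^ 2 := by
    have hδ' : 2 * δ ^ 2 * 2 ^ (K - 1) = 1 := by
      have hK₂ : (2 : ℝ) ^ K = 2 * 2 ^ (K - 1) := by rw [← pow_succ', Nat.sub_add_cancel hK]
      linarith [hK₂ ▸ two_rpow_neg_half_sq_mul K]
    calc t ^ 2 = 2 * δ ^ 2 * (2 ^ (K - 1) * t ^ 2) := by linear_combination (-t ^ 2) * hδ'
      _ ≤ 2 * δ ^ 2 * K := by gcongr; exact hv.two_pow_mul_sq_le hρ₁ hK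
      _ = 2 * K * δ ^ 2 := by ring
  have ht : t ≤ 2 * √K * δ := by
    refine le_of_pow_le_pow_left₀ two_ne_zero (by positivity) ?_
    rw [mul_pow, mul_pow, Real.sq_sqrt (Nat.cast_nonneg K)]
    nlinarith
  have hsqrt : 1 ≤ √(K : ℝ) := Real.one_le_sqrt.2 (by exact_mod_cast hK)
  have ht₂ : t ^ 2 ≤ δ / 4 := by nlinarith
  rw [hv.apply_one hK]
  nlinarith [mul_le_mul_of_nonneg_right hρδ (sub_nonneg.2 (pow_le_one₀ ht₀ (hv.le_one K) (n := 2))),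
    mul_le_mul_of_nonneg_right hsqrt hδ₀.le, mul_nonneg hδ₀.le (sq_nonneg t)]

end IsTwoChoiceProfile

theorem homogeneous_performance_interval_general (K : ℕ)
    (lam mu : ℝ) (hlam : 0 < lam) (hmu : 0 < mu) (s : ℝ)
    (hs : s ∈ Set.Icc ((K : ℝ) / 2 + lam / mu) ((K : ℝ) - Real.logb 2 K - 3))
    (ρ : ℝ) (hρ : 0 < ρ)
    (heq : s = lam / mu * ρ + ∑ k ∈ Finset.Icc 1 K, nuV ρ K k) :
    ρ ∈ Set.Icc (1 - (2 : ℝ) ^ (-(K : ℝ) / 2)) 1 ∧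
    propProblematic ρ K ≤ 4 * Real.sqrt K * (2 : ℝ) ^ (-(K : ℝ) / 2) := by
  have hv := isTwoChoiceProfile_nu hρ K
  rw [nuV] at heq
  have ha : 0 < lam / mu := div_pos hlam hmu
  have hlog : logb 2 K + 3 ≤ K / 2 := by linarith [hs.1.trans hs.2]
  have hK := six_le_of_logb_add_three_le hlog
  have hρ₁ : ρ ≤ 1 := by
    by_contra! h
    have := hv.sum_one_sub_le_logb h.le (by omega)
    rw [sum_sub_distrib, sum_const, Nat.card_Icc, Nat.add_sub_cancel, nsmul_one] at this
    linarith [hs.2, mul_pos ha hρ]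
  have hρδ : 1 - (2 : ℝ) ^ (-(K : ℝ) / 2) ≤ ρ := by
    by_contra! h
    have := hv.sum_le_half hρ h.le hK
    have hρ1 : ρ < 1 := by linarith [(by positivity : (0 : ℝ) < 2 ^ (-(K : ℝ) / 2))]
    linarith [hs.1, mul_lt_mul_of_pos_left hρ1 ha]
  exact ⟨⟨hρδ, hρ₁⟩, hv.one_sub_add_le_four_mul_sqrt hρ₁ hρδ (by omega)
    (eight_mul_mul_two_rpow_neg_half_le_one hlog)⟩

/-- if `s ∈ [K/2 + λ/μ, K − log₂ K − 3]`, then any `ρ > 0` with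
`s = (λ/μ)ρ + Σ_{k=1}^K ν_{ρ,K}(k)` lies in `[1 − 2^{−K/2}, 1]`, and consequently
`P(ρ, K) ≤ 4 √K 2^{−K/2}`. -/
theorem homogeneous_performance_interval (K : ℕ) (hK : 1 ≤ K)
    (lam mu : ℝ) (hlam : 0 < lam) (hmu : 0 < mu) (s : ℝ)
    (hs : s ∈ Set.Icc ((K : ℝ) / 2 + lam / mu) ((K : ℝ) - Real.logb 2 K - 3))
    (ρ : ℝ) (hρ : 0 < ρ)
    (heq : s = lam / mu * ρ + ∑ k ∈ Finset.Icc 1 K, nuV ρ K k) :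
    ρ ∈ Set.Icc (1 - (2 : ℝ) ^ (-(K : ℝ) / 2)) 1 ∧
    propProblematic ρ K ≤ 4 * Real.sqrt K * (2 : ℝ) ^ (-(K : ℝ) / 2) :=
  homogeneous_performance_interval_general K lam mu hlam hmu s hs ρ hρ heq
end
end

section
/- Let K ≥ 1 be an integer and let 0 < ρ ≤ 1. Then the unique two-choice profile u = ν_{ρ,K} satisfies, with ε := ρ − u_1, the lower bound u_k ≥ max(ρ^{2^k − 1} − 2^k ε, 0) for every 1 ≤ k ≤ K. -/
/-!
Summing the defining relation `u_k − u_{k+1} = ρ (u_{k−1}² − u_k²)` from `k` to `K` telescopes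
(using `u_{K+1} = 0`) to `u_k = ρ u_{k−1}² − ρ u_K²`, so `ε = ρ u_K² ≥ 0` and `u_{k+1} = ρ u_k² − ε`.
Squaring a lower bound `u_k ≥ ρ^{2^k−1} − (2^k−1) ε` and using `ρ · ρ^{2^k−1} ≤ 1` doubles the
coefficient of `ε`, which gives the same bound at `k + 1`; the bound `u_k ≥ 0` comes from
monotonicity and `u_K ≥ 0`.
-/

open Finset Real

noncomputable section

theorem pow_two_pow_succ_sub_one {M : Type*} [Monoid M] (x : M) (k : ℕ) :
    x ^ (2 ^ (k + 1) - 1) = x * (x ^ (2 ^ k - 1)) ^ 2 := by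
  rw [← pow_mul, ← pow_succ']
  have : 1 ≤ 2 ^ k := Nat.one_le_two_pow
  congr 1
  rw [pow_succ]
  omega

theorem sub_mul_le_sq_sub {ρ ε a c x : ℝ} (hρ : 0 ≤ ρ) (ha : 0 ≤ a) (hρa : ρ * a ≤ 1)
    (hε : 0 ≤ ε) (hc : 0 ≤ c) (hx : a - c * ε ≤ x) :
    ρ * a ^ 2 - (2 * c + 1) * ε ≤ ρ * x ^ 2 - ε := by
  have hcε : 0 ≤ c * ε := mul_nonneg hc hε
  rcases le_or_gt 0 (a - c * ε) with hpos | hneg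
  · have hsq : (a - c * ε) ^ 2 ≤ x ^ 2 := pow_le_pow_left₀ hpos hx 2
    nlinarith [mul_nonneg hcε (sub_nonneg.2 hρa), mul_nonneg hρ (sq_nonneg (c * ε))]
  · -- here `ρ a² ≤ a < c ε`
    nlinarith [mul_nonneg hρ (sq_nonneg x)]

theorem le_of_sq_sub_recurrence {ρ ε : ℝ} {K : ℕ} {x : ℕ → ℝ} (hρ0 : 0 ≤ ρ) (hρ1 : ρ ≤ 1)
    (hε : 0 ≤ ε) (h1 : x 1 = ρ - ε) (hsucc : ∀ k, 1 ≤ k → k < K → x (k + 1) = ρ * x k ^ 2 - ε) :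
    ∀ k, 1 ≤ k → k ≤ K → ρ ^ (2 ^ k - 1) - ((2 : ℝ) ^ k - 1) * ε ≤ x k := by
  intro k hk
  induction k, hk using Nat.le_induction with
  | base => intro; norm_num [h1]
  | succ k hk ih =>
    intro hkK
    have ha : ρ * ρ ^ (2 ^ k - 1) ≤ 1 := by
      rw [← pow_succ']
      exact pow_le_one₀ hρ0 hρ1
    have hstep := sub_mul_le_sq_sub hρ0 (by positivity) ha hε
      (sub_nonneg.2 (one_le_pow₀ (by norm_num))) (ih (by omega))
    rw [hsucc k hk (by omega), pow_two_pow_succ_sub_one, pow_succ (2 : ℝ) k]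
    linarith

namespace IsTwoChoiceProfile

variable {ρ : ℝ} {K : ℕ} {u : Fin (K + 1) → ℝ}

theorem extProfile_nonneg (hu : IsTwoChoiceProfile ρ K u) (k : ℕ) : 0 ≤ extProfile K u k := by
  obtain ⟨-, hmono, hK, -⟩ := hu
  rcases le_or_gt k K with hk | hk
  · induction hk using Nat.decreasingInduction with
    | self => exact hK
    | of_succ k hk ih => exact ih.trans (hmono k hk)
  · simp [extProfile, show ¬k < K + 1 by omega]

theorem extProfile_succ_eq (hu : IsTwoChoiceProfile ρ K u) {k : ℕ} (hk : k ≤ K) :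
    extProfile K u (k + 1) = ρ * (extProfile K u k ^ 2 - extProfile K u K ^ 2) := by
  obtain ⟨-, -, -, hrec⟩ := hu
  induction hk using Nat.decreasingInduction with
  | self => simp [extProfile]
  | of_succ k hk ih =>
    have hrec_succ := hrec (k + 1) (by omega) hk
    simp only [Nat.add_sub_cancel] at hrec_succ
    linarith

theorem sub_extProfile_one (hu : IsTwoChoiceProfile ρ K u) :
    ρ - extProfile K u 1 = ρ * extProfile K u K ^ 2 := by
  rw [hu.extProfile_succ_eq (Nat.zero_le K), hu.1]
  ring

theorem extProfile_succ_eq_sq_sub (hu : IsTwoChoiceProfile ρ K u) {k : ℕ} (hk : k ≤ K) :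
    extProfile K u (k + 1) = ρ * extProfile K u k ^ 2 - (ρ - extProfile K u 1) := by
  rw [hu.extProfile_succ_eq hk, hu.sub_extProfile_one]
  ring

end IsTwoChoiceProfile

theorem profile_lower_bounds_general (K : ℕ) (ρ : ℝ)
    (hρ0 : 0 < ρ) (hρ1 : ρ ≤ 1)
    (u : Fin (K + 1) → ℝ) (hu : IsTwoChoiceProfile ρ K u) :
    ∀ k, 1 ≤ k → k ≤ K →
      max (ρ ^ (2 ^ k - 1) - (2 : ℝ) ^ k * (ρ - extProfile K u 1)) 0 ≤
        extProfile K u k := by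
  have hε : 0 ≤ ρ - extProfile K u 1 := by
    rw [hu.sub_extProfile_one]
    positivity
  have hbound := le_of_sq_sub_recurrence hρ0.le hρ1 hε (by ring)
    (fun k _ hk => hu.extProfile_succ_eq_sq_sub hk.le)
  intro k hk hkK
  refine max_le ?_ (hu.extProfile_nonneg k)
  linarith [hbound k hk hkK]

/-- for `0 < ρ ≤ 1` and `ε := ρ − u_1`, the unique two-choice profile
satisfies `u_k ≥ max(ρ^{2^k − 1} − 2^k ε, 0)` for every `1 ≤ k ≤ K`. -/
theorem profile_lower_bounds (K : ℕ) (hK : 1 ≤ K) (ρ : ℝ)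
    (hρ0 : 0 < ρ) (hρ1 : ρ ≤ 1)
    (u : Fin (K + 1) → ℝ) (hu : IsTwoChoiceProfile ρ K u) :
    ∀ k, 1 ≤ k → k ≤ K →
      max (ρ ^ (2 ^ k - 1) - (2 : ℝ) ^ k * (ρ - extProfile K u 1)) 0 ≤
        extProfile K u k :=
  profile_lower_bounds_general K ρ hρ0 hρ1 u hu
end
end
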